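/- arXiv:2309.13597 — 2 statements merged into one kernel-verified Lean document; each statement's English description precedes it below -/
import Mathlib

section
/- There exists a constant C_α > 0, depending only on α, namely C_α = (1/Γ(α)) · (1/(2α−1) + ∫₀^∞ ((ξ+1)^(α−1) − ξ^(α−1))² dξ)^(1/2), such that for all 0 ≤ r ≤ t ≤ T and all x ∈ ℝ^d, ‖σ(t)x − σ(r)x‖₂ ≤ C_α · |t−r|^(α−1/2) · |x|; in particular the map t ↦ σ(t) is (α−1/2)-Hölder continuous from [0,T] to the space of bounded linear operators ℒ(ℝ^d; H). -/
open MeasureTheory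

noncomputable section

/-- Lebesgue measure restricted to `(0,T)`. -/
abbrev fracMeas (T : ℝ) : Measure ℝ := volume.restrict (Set.Ioo 0 T)

/-- The Hilbert space `H = L²((0,T); ℝ^d)`. -/
abbrev HSp (d : ℕ) (T : ℝ) := Lp (EuclideanSpace ℝ (Fin d)) 2 (fracMeas T)

/-!
With `k(u) = u₊^(α-1)`, the squared distance `‖σ(t)x - σ(r)x‖²` equals
`‖x‖² Γ(α)⁻² ∫ (k(ξ-t) - k(ξ-r))² dξ`. On `(r, t]` only `k(ξ-r)` is nonzero, contributing
`(t-r)^(2α-1) / (2α-1)`; on `(t, ∞)` the substitution `ξ = t + (t-r) v` gives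
`(t-r)^(2α-1) ∫₀^∞ ((v+1)^(α-1) - v^(α-1))² dv`. This integral converges because the integrand
is `O(v^(2α-2))` at `0` and, by the tangent-line bound for the convex map `u ↦ u^(α-1)`,
`O(v^(2α-4))` at `∞`.
-/

open Set Real

theorem one_add_mul_self_le_rpow_one_add_of_nonpos {s : ℝ} (hs : -1 < s) {p : ℝ}
    (hp1 : -1 ≤ p) (hp2 : p ≤ 0) : 1 + p * s ≤ (1 + s) ^ p := by
  have hs1 : 0 < 1 + s := by linarith
  have hy : 0 < (1 + s) ^ p := rpow_pos_of_pos hs1 p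
  have hinv : ((1 + s) ^ p)⁻¹ ≤ 1 + -p * s := by
    rw [← rpow_neg hs1.le]
    exact rpow_one_add_le_one_add_mul_self hs.le (by linarith) (by linarith)
  -- `(1 + p s) (1 - p s) ≤ 1 ≤ (1 + s) ^ p (1 - p s)`
  have h1 : 1 ≤ (1 + s) ^ p * (1 + -p * s) := by
    rwa [inv_le_iff_one_le_mul₀' hy] at hinv
  nlinarith [sq_nonneg (p * s)]

theorem rpow_sub_rpow_add_le {p u δ : ℝ} (hp1 : -1 ≤ p) (hp2 : p ≤ 0) (hu : 0 < u)
    (hδ : 0 ≤ δ) : u ^ p - (u + δ) ^ p ≤ -p * δ * u ^ (p - 1) := by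
  have hsplit : (u + δ) ^ p = u ^ p * (1 + δ / u) ^ p := by
    rw [← mul_rpow hu.le (by positivity), mul_one_add, mul_div_cancel₀ _ hu.ne']
  have hb := one_add_mul_self_le_rpow_one_add_of_nonpos
    ((neg_one_lt_zero).trans_le (div_nonneg hδ hu.le)) hp1 hp2
  have hup : 0 < u ^ p := rpow_pos_of_pos hu p
  rw [hsplit, rpow_sub_one hu.ne']
  have := mul_le_mul_of_nonneg_left hb hup.le
  calc u ^ p - u ^ p * (1 + δ / u) ^ p ≤ u ^ p - u ^ p * (1 + p * (δ / u)) := by linarith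
    _ = -p * δ * (u ^ p / u) := by field_simp; ring

theorem sq_rpow {x : ℝ} (hx : 0 ≤ x) (a : ℝ) : (x ^ a) ^ 2 = x ^ (2 * a) := by
  rw [← rpow_mul_natCast hx, mul_comm]; norm_num

theorem integrableOn_Ioi_sq_rpow_add_one_sub_rpow {p : ℝ} (hp1 : -1 / 2 < p) (hp2 : p ≤ 0) :
    IntegrableOn (fun v : ℝ => ((v + 1) ^ p - v ^ p) ^ 2) (Ioi 0) := by
  have hmeas : AEStronglyMeasurable (fun v : ℝ => ((v + 1) ^ p - v ^ p) ^ 2) :=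
    (by fun_prop : Measurable fun v : ℝ => ((v + 1) ^ p - v ^ p) ^ 2).aestronglyMeasurable
  have hbound : ∀ v : ℝ, 0 < v → ∀ b, v ^ p - (v + 1) ^ p ≤ b →
      ‖((v + 1) ^ p - v ^ p) ^ 2‖ ≤ b ^ 2 := fun v hv b hb => by
    have h0 : 0 ≤ v ^ p - (v + 1) ^ p :=
      sub_nonneg.2 (rpow_le_rpow_of_nonpos hv (by linarith) hp2)
    rw [Real.norm_eq_abs, abs_of_nonneg (sq_nonneg _), ← neg_sub, neg_sq]
    exact pow_le_pow_left₀ h0 hb 2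
  rw [← Ioc_union_Ioi_eq_Ioi zero_le_one]
  refine IntegrableOn.union ?_ ?_
  · have hmaj : IntegrableOn (fun v : ℝ => v ^ (2 * p)) (Ioc 0 1) := by
      rw [← intervalIntegrable_iff_integrableOn_Ioc_of_le zero_le_one]
      exact intervalIntegral.intervalIntegrable_rpow' (by linarith)
    refine hmaj.mono' hmeas.restrict ?_
    filter_upwards [ae_restrict_mem measurableSet_Ioc] with v hv
    rw [← sq_rpow hv.1.le]
    exact hbound v hv.1 _ (sub_le_self _ (rpow_nonneg (by linarith [hv.1]) _))
  · have hmaj : IntegrableOn (fun v : ℝ => p ^ 2 * v ^ (2 * (p - 1))) (Ioi 1) :=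
      (integrableOn_Ioi_rpow_of_lt (by linarith) zero_lt_one).const_mul _
    refine hmaj.mono' hmeas.restrict ?_
    filter_upwards [ae_restrict_mem measurableSet_Ioi] with v hv
    have hv0 : 0 < v := zero_lt_one.trans hv
    have := hbound v hv0 _ (rpow_sub_rpow_add_le (by linarith) hp2 hv0 zero_le_one)
    rwa [mul_one, mul_pow, neg_sq, sq_rpow hv0.le] at this

theorem sq_rpow_mul_sub_rpow_mul_add {p δ v : ℝ} (hδ : 0 ≤ δ) (hv : 0 ≤ v) :
    ((δ * v) ^ p - (δ * v + δ) ^ p) ^ 2 = δ ^ (2 * p) * ((v + 1) ^ p - v ^ p) ^ 2 := by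
  rw [← mul_add_one, mul_rpow hδ hv, mul_rpow hδ (by linarith), ← sq_rpow hδ]
  ring

theorem integrableOn_Ioi_sq_rpow_sub_rpow_add {p δ : ℝ} (hp1 : -1 / 2 < p) (hp2 : p ≤ 0)
    (hδ : 0 < δ) : IntegrableOn (fun u : ℝ => (u ^ p - (u + δ) ^ p) ^ 2) (Ioi 0) := by
  rw [← mul_zero δ, ← integrableOn_Ioi_comp_mul_left_iff _ 0 hδ]
  exact IntegrableOn.congr_fun
    ((integrableOn_Ioi_sq_rpow_add_one_sub_rpow hp1 hp2).const_mul (δ ^ (2 * p)))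
    (fun v hv => (sq_rpow_mul_sub_rpow_mul_add hδ.le (le_of_lt hv)).symm) measurableSet_Ioi

theorem integral_Ioi_sq_rpow_sub_rpow_add {p δ : ℝ} (hδ : 0 < δ) :
    ∫ u in Ioi 0, (u ^ p - (u + δ) ^ p) ^ 2 =
      δ ^ (2 * p + 1) * ∫ v in Ioi 0, ((v + 1) ^ p - v ^ p) ^ 2 := by
  have h := integral_comp_mul_left_Ioi' (fun u : ℝ => (u ^ p - (u + δ) ^ p) ^ 2) 0 hδ
  rw [mul_zero, setIntegral_congr_fun measurableSet_Ioi
      (fun v hv => sq_rpow_mul_sub_rpow_mul_add hδ.le (le_of_lt hv)),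
    integral_const_mul, smul_eq_mul] at h
  rw [← h, rpow_add hδ, rpow_one]
  ring

theorem integral_comp_add_right_Ioi {E : Type*} [NormedAddCommGroup E] [NormedSpace ℝ E]
    (g : ℝ → E) (a b : ℝ) : ∫ x in Ioi a, g (x + b) = ∫ x in Ioi (a + b), g x := by
  simpa using (measurePreserving_add_right volume b).setIntegral_preimage_emb
    (measurableEmbedding_addRight b) g (Ioi (a + b))

theorem integrableOn_Ioi_comp_add_right_iff {E : Type*} [NormedAddCommGroup E]
    (g : ℝ → E) (a b : ℝ) :
    IntegrableOn (fun x => g (x + b)) (Ioi a) ↔ IntegrableOn g (Ioi (a + b)) := by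
  simpa [Function.comp_def] using
    (measurePreserving_add_right volume b).integrableOn_comp_preimage
      (measurableEmbedding_addRight b) (f := g) (s := Ioi (a + b))

theorem MeasureTheory.L2.norm_sq_eq_of_ae_eq_smul {X E : Type*} [MeasurableSpace X]
    {μ : Measure X} [NormedAddCommGroup E] [InnerProductSpace ℝ E] {f : Lp E 2 μ} {φ : X → ℝ}
    {x : E} (hf : f =ᵐ[μ] fun a => φ a • x) : ‖f‖ ^ 2 = ‖x‖ ^ 2 * ∫ a, φ a ^ 2 ∂μ := by
  rw [← real_inner_self_eq_norm_sq, L2.inner_def, ← integral_const_mul]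
  refine integral_congr_ae ?_
  filter_upwards [hf] with a ha
  rw [ha, real_inner_self_eq_norm_sq, norm_smul, mul_pow, Real.norm_eq_abs, sq_abs, mul_comm]

/-- The paper's `k₂(ξ - t)` without the factor `1 / Γ(α)`, extended by `0` for `ξ ≤ t`. -/
def fracKernel (α t ξ : ℝ) : ℝ := if t < ξ then (ξ - t) ^ (α - 1) else 0

section FracKernel

variable {α r t : ℝ}

theorem ite_smul_eq_fracKernel_smul {E : Type*} [AddCommGroup E] [Module ℝ E] (c ξ : ℝ) (x : E) :
    (if t < ξ then ((ξ - t) ^ (α - 1) / c) • x else 0) = (fracKernel α t ξ / c) • x := by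
  unfold fracKernel
  split_ifs <;> simp

theorem sq_fracKernel_sub_of_le (hrt : r ≤ t) {ξ : ℝ} (hξ : ξ ≤ r) :
    (fracKernel α t ξ - fracKernel α r ξ) ^ 2 = 0 := by
  simp [fracKernel, not_lt.2 hξ, not_lt.2 (hξ.trans hrt)]

theorem eqOn_sq_fracKernel_sub_Ioc :
    EqOn (fun ξ => (fracKernel α t ξ - fracKernel α r ξ) ^ 2) (fun ξ => (ξ - r) ^ (2 * α - 2))
      (Ioc r t) := fun ξ hξ => by
  simp only [fracKernel, if_neg (not_lt.2 hξ.2), if_pos hξ.1, zero_sub, neg_sq]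
  rw [sq_rpow (sub_nonneg.2 hξ.1.le)]
  ring_nf

theorem sq_fracKernel_sub_add {u : ℝ} (hrt : r ≤ t) (hu : 0 < u) :
    (fracKernel α t (u + t) - fracKernel α r (u + t)) ^ 2 =
      (u ^ (α - 1) - (u + (t - r)) ^ (α - 1)) ^ 2 := by
  have hr : r < u + t := by linarith
  simp only [fracKernel, if_pos (lt_add_of_pos_left t hu), if_pos hr]
  ring_nf

theorem integrableOn_Ioc_sq_fracKernel_sub (hα : 1 / 2 < α) (hrt : r ≤ t) :
    IntegrableOn (fun ξ => (fracKernel α t ξ - fracKernel α r ξ) ^ 2) (Ioc r t) := by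
  have h := (intervalIntegral.intervalIntegrable_rpow' (r := 2 * α - 2) (a := 0) (b := t - r)
    (by linarith)).comp_sub_right r
  rw [zero_add, sub_add_cancel, intervalIntegrable_iff_integrableOn_Ioc_of_le hrt] at h
  exact h.congr_fun eqOn_sq_fracKernel_sub_Ioc.symm measurableSet_Ioc

theorem setIntegral_Ioc_sq_fracKernel_sub (hα : 1 / 2 < α) (hrt : r ≤ t) :
    ∫ ξ in Ioc r t, (fracKernel α t ξ - fracKernel α r ξ) ^ 2 =
      (t - r) ^ (2 * α - 1) / (2 * α - 1) := by
  rw [setIntegral_congr_fun measurableSet_Ioc eqOn_sq_fracKernel_sub_Ioc,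
    ← intervalIntegral.integral_of_le hrt,
    intervalIntegral.integral_comp_sub_right (fun x => x ^ (2 * α - 2)) r, sub_self,
    integral_rpow (Or.inl (by linarith)), zero_rpow (by linarith),
    show 2 * α - 2 + 1 = 2 * α - 1 by ring, sub_zero]

theorem integrableOn_Ioi_sq_fracKernel_sub (hα1 : 1 / 2 < α) (hα2 : α ≤ 1) (hrt : r < t) :
    IntegrableOn (fun ξ => (fracKernel α t ξ - fracKernel α r ξ) ^ 2) (Ioi t) := by
  have h := integrableOn_Ioi_comp_add_right_iff
    (fun ξ => (fracKernel α t ξ - fracKernel α r ξ) ^ 2) 0 t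
  rw [zero_add] at h
  rw [← h]
  exact (integrableOn_Ioi_sq_rpow_sub_rpow_add (p := α - 1) (by linarith) (by linarith)
    (sub_pos.2 hrt)).congr_fun (fun u hu => (sq_fracKernel_sub_add hrt.le hu).symm)
    measurableSet_Ioi

theorem setIntegral_Ioi_sq_fracKernel_sub (hrt : r < t) :
    ∫ ξ in Ioi t, (fracKernel α t ξ - fracKernel α r ξ) ^ 2 =
      (t - r) ^ (2 * α - 1) * ∫ v in Ioi 0, ((v + 1) ^ (α - 1) - v ^ (α - 1)) ^ 2 := by
  have h := integral_comp_add_right_Ioi (fun ξ => (fracKernel α t ξ - fracKernel α r ξ) ^ 2) 0 t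
  rw [zero_add] at h
  rw [← h, setIntegral_congr_fun measurableSet_Ioi (fun u hu => sq_fracKernel_sub_add hrt.le hu),
    integral_Ioi_sq_rpow_sub_rpow_add (sub_pos.2 hrt), show 2 * (α - 1) + 1 = 2 * α - 1 by ring]

theorem setIntegral_sq_fracKernel_sub_le (hα1 : 1 / 2 < α) (hα2 : α ≤ 1) (hrt : r ≤ t)
    (s : Set ℝ) :
    ∫ ξ in s, (fracKernel α t ξ - fracKernel α r ξ) ^ 2 ≤
      (t - r) ^ (2 * α - 1) *
        (1 / (2 * α - 1) + ∫ v in Ioi 0, ((v + 1) ^ (α - 1) - v ^ (α - 1)) ^ 2) := by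
  rcases hrt.eq_or_lt with rfl | hrt
  · simp [zero_rpow (by linarith : 2 * α - 1 ≠ 0)]
  set f := fun ξ => (fracKernel α t ξ - fracKernel α r ξ) ^ 2
  have hsupp : ∀ ξ ∉ Ioi r, f ξ = 0 := fun ξ hξ =>
    sq_fracKernel_sub_of_le hrt.le (not_lt.1 hξ)
  have hint : IntegrableOn f (Ioi r) := by
    rw [← Ioc_union_Ioi_eq_Ioi hrt.le]
    exact (integrableOn_Ioc_sq_fracKernel_sub hα1 hrt.le).union
      (integrableOn_Ioi_sq_fracKernel_sub hα1 hα2 hrt)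
  calc ∫ ξ in s, f ξ ≤ ∫ ξ, f ξ :=
        setIntegral_le_integral
          ((integrableOn_iff_integrable_of_support_subset
            (Function.support_subset_iff'.2 hsupp)).1 hint)
          (ae_of_all _ fun _ => sq_nonneg _)
    _ = ∫ ξ in Ioi r, f ξ := (setIntegral_eq_integral_of_forall_compl_eq_zero hsupp).symm
    _ = (∫ ξ in Ioc r t, f ξ) + ∫ ξ in Ioi t, f ξ := by
        rw [← Ioc_union_Ioi_eq_Ioi hrt.le]
        exact setIntegral_union Ioc_disjoint_Ioi_same measurableSet_Ioi
          (integrableOn_Ioc_sq_fracKernel_sub hα1 hrt.le)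
          (integrableOn_Ioi_sq_fracKernel_sub hα1 hα2 hrt)
    _ = _ := by
        simp only [f]
        rw [setIntegral_Ioc_sq_fracKernel_sub hα1 hrt.le, setIntegral_Ioi_sq_fracKernel_sub hrt]
        ring

end FracKernel

def holderConst (α : ℝ) : ℝ :=
  (1 / Gamma α) * √(1 / (2 * α - 1) + ∫ ξ in Ioi (0 : ℝ), ((ξ + 1) ^ (α - 1) - ξ ^ (α - 1)) ^ 2)

theorem holderConst_pos {α : ℝ} (hα : 1 / 2 < α) : 0 < holderConst α := by
  have hΓ : 0 < Gamma α := Gamma_pos_of_pos (by linarith)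
  have hI : 0 ≤ ∫ ξ in Ioi (0 : ℝ), ((ξ + 1) ^ (α - 1) - ξ ^ (α - 1)) ^ 2 :=
    setIntegral_nonneg measurableSet_Ioi fun _ _ => sq_nonneg _
  have h2α : 0 < 2 * α - 1 := by linarith
  unfold holderConst
  positivity

theorem norm_le_holderConst_mul {E : Type*} [NormedAddCommGroup E] [InnerProductSpace ℝ E]
    {s : Set ℝ} {α r t : ℝ} (hα1 : 1 / 2 < α) (hα2 : α ≤ 1) (hrt : r ≤ t)
    {f : Lp E 2 (volume.restrict s)} {x : E}
    (hf : f =ᵐ[volume.restrict s] fun ξ => ((fracKernel α t ξ - fracKernel α r ξ) / Gamma α) • x) :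
    ‖f‖ ≤ holderConst α * (t - r) ^ (α - 1 / 2) * ‖x‖ := by
  have hI : 0 ≤ ∫ ξ in Ioi (0 : ℝ), ((ξ + 1) ^ (α - 1) - ξ ^ (α - 1)) ^ 2 :=
    setIntegral_nonneg measurableSet_Ioi fun _ _ => sq_nonneg _
  have h2α : 0 < 2 * α - 1 := by linarith
  refine le_of_sq_le_sq ?_ (by have := holderConst_pos hα1; have := sub_nonneg.2 hrt; positivity)
  calc ‖f‖ ^ 2 = ‖x‖ ^ 2 / Gamma α ^ 2 * ∫ ξ in s, (fracKernel α t ξ - fracKernel α r ξ) ^ 2 := by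
        simp_rw [L2.norm_sq_eq_of_ae_eq_smul hf, div_pow, integral_div]
        ring
    _ ≤ ‖x‖ ^ 2 / Gamma α ^ 2 * ((t - r) ^ (2 * α - 1) *
          (1 / (2 * α - 1) + ∫ v in Ioi 0, ((v + 1) ^ (α - 1) - v ^ (α - 1)) ^ 2)) := by
        gcongr
        exact setIntegral_sq_fracKernel_sub_le hα1 hα2 hrt s
    _ = (holderConst α * (t - r) ^ (α - 1 / 2) * ‖x‖) ^ 2 := by
        rw [holderConst, mul_pow, mul_pow, mul_pow, sq_sqrt (by positivity),
          sq_rpow (sub_nonneg.2 hrt), show 2 * (α - 1 / 2) = 2 * α - 1 by ring]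
        ring

theorem statement3_general (d : ℕ) (T α : ℝ)
    (hα1 : 1 / 2 < α) (hα2 : α < 1)
    (σ : ℝ → EuclideanSpace ℝ (Fin d) →L[ℝ] HSp d T)
    (hσ : ∀ t ∈ Set.Icc (0 : ℝ) T, ∀ x : EuclideanSpace ℝ (Fin d),
      ∀ᵐ ξ ∂fracMeas T,
        (σ t x : ℝ → EuclideanSpace ℝ (Fin d)) ξ =
          if t < ξ then ((ξ - t) ^ (α - 1) / Real.Gamma α) • x else 0) :
    let Cα : ℝ := (1 / Real.Gamma α) *
      Real.sqrt (1 / (2 * α - 1) +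
        ∫ ξ in Set.Ioi (0 : ℝ), ((ξ + 1) ^ (α - 1) - ξ ^ (α - 1)) ^ 2)
    0 < Cα ∧
      (∀ r t : ℝ, 0 ≤ r → r ≤ t → t ≤ T → ∀ x : EuclideanSpace ℝ (Fin d),
        ‖σ t x - σ r x‖ ≤ Cα * (t - r) ^ (α - 1 / 2) * ‖x‖) ∧
      (∀ r t : ℝ, 0 ≤ r → r ≤ t → t ≤ T →
        ‖σ t - σ r‖ ≤ Cα * (t - r) ^ (α - 1 / 2)) := by
  show 0 < holderConst α ∧ _
  have hσ_sub : ∀ r t : ℝ, 0 ≤ r → r ≤ t → t ≤ T → ∀ x,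
      σ t x - σ r x =ᵐ[fracMeas T]
        fun ξ => ((fracKernel α t ξ - fracKernel α r ξ) / Gamma α) • x := by
    intro r t hr hrt htT x
    filter_upwards [hσ t ⟨hr.trans hrt, htT⟩ x, hσ r ⟨hr, hrt.trans htT⟩ x,
      Lp.coeFn_sub (σ t x) (σ r x)] with ξ hσt hσr hsub
    rw [hsub, Pi.sub_apply, hσt, hσr, ite_smul_eq_fracKernel_smul, ite_smul_eq_fracKernel_smul,
      ← sub_smul, sub_div]
  have pointwise : ∀ r t : ℝ, 0 ≤ r → r ≤ t → t ≤ T → ∀ x : EuclideanSpace ℝ (Fin d),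
      ‖σ t x - σ r x‖ ≤ holderConst α * (t - r) ^ (α - 1 / 2) * ‖x‖ :=
    fun r t hr hrt htT x => norm_le_holderConst_mul hα1 hα2.le hrt (hσ_sub r t hr hrt htT x)
  refine ⟨holderConst_pos hα1, pointwise, fun r t hr hrt htT => ?_⟩
  exact ContinuousLinearMap.opNorm_le_bound _
    (mul_nonneg (holderConst_pos hα1).le (rpow_nonneg (sub_nonneg.2 hrt) _))
    (pointwise r t hr hrt htT)

/-- With `C_α = (1/Γ(α)) (1/(2α−1) + ∫₀^∞ ((ξ+1)^(α−1) − ξ^(α−1))² dξ)^(1/2) > 0`,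
for all `0 ≤ r ≤ t ≤ T` and `x ∈ ℝ^d`, `‖σ(t)x − σ(r)x‖₂ ≤ C_α |t−r|^(α−1/2) |x|`; in particular
`t ↦ σ(t)` is `(α−1/2)`-Hölder continuous from `[0,T]` to `ℒ(ℝ^d; H)`. -/
theorem statement3 (d : ℕ) (hd : 1 ≤ d) (T α : ℝ) (hT : 0 < T)
    (hα1 : 1 / 2 < α) (hα2 : α < 1)
    (σ : ℝ → EuclideanSpace ℝ (Fin d) →L[ℝ] HSp d T)
    (hσ : ∀ t ∈ Set.Icc (0 : ℝ) T, ∀ x : EuclideanSpace ℝ (Fin d),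
      ∀ᵐ ξ ∂fracMeas T,
        (σ t x : ℝ → EuclideanSpace ℝ (Fin d)) ξ =
          if t < ξ then ((ξ - t) ^ (α - 1) / Real.Gamma α) • x else 0) :
    let Cα : ℝ := (1 / Real.Gamma α) *
      Real.sqrt (1 / (2 * α - 1) +
        ∫ ξ in Set.Ioi (0 : ℝ), ((ξ + 1) ^ (α - 1) - ξ ^ (α - 1)) ^ 2)
    0 < Cα ∧
      (∀ r t : ℝ, 0 ≤ r → r ≤ t → t ≤ T → ∀ x : EuclideanSpace ℝ (Fin d),
        ‖σ t x - σ r x‖ ≤ Cα * (t - r) ^ (α - 1 / 2) * ‖x‖) ∧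
      (∀ r t : ℝ, 0 ≤ r → r ≤ t → t ≤ T →
        ‖σ t - σ r‖ ≤ Cα * (t - r) ^ (α - 1 / 2)) :=
  statement3_general d T α hα1 hα2 σ hσ
end
end

section
/- Suppose B̄ satisfies Assumptions (B1) and (B2), and for 0 ≤ s ≤ t ≤ T let S_{s,t}(ψ) denote the unique solution in H of the Volterra fixed-point equation E(s,t,ψ). Then for every 0 ≤ s ≤ t ≤ T the map S_{s,t} : H → H is Fréchet differentiable at every point; for every ψ, η ∈ H, the derivative DS_{s,t}(ψ)η is the unique v ∈ H with v(ξ) = η(ξ) + ∫ₛᵗ (DB̄(S_{s,t}(ψ))v)(r,ξ) dr for a.e. ξ ∈ (0,T); and there exists a constant C₂ > 0 depending only on C₀ and T such that for all ψ, ψ₁, ψ₂, η ∈ H: ‖DS_{s,t}(ψ)η‖₂ ≤ C₂‖η‖₂ and ‖DS_{s,t}(ψ₁)η − DS_{s,t}(ψ₂)η‖₂ ≤ C₂‖S_{s,t}(ψ₁) − S_{s,t}(ψ₂)‖₂^γ · ‖η‖₂. In particular, ψ ↦ DS_{s,t}(ψ) is γ-Hölder continuous from H to ℒ(H;H). -/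
open MeasureTheory

noncomputable section

/-- The space `H_⊗ = L²((0,T)×(0,T); ℝ^d)`. -/
abbrev HTen (d : ℕ) (T : ℝ) :=
  Lp (EuclideanSpace ℝ (Fin d)) 2 ((fracMeas T).prod (fracMeas T))

/-- **Assumption (B1)**: growth, Lipschitz continuity, the Volterra property and causality
of the extended drift `B̄ : H → H_⊗`. -/
structure AssumptionB1 (d : ℕ) (T : ℝ) (B : HSp d T → HTen d T) (C₀ : ℝ) : Prop where
  growth : ∀ w : HSp d T, ‖B w‖ ≤ C₀ * (1 + ‖w‖)
  lipschitz : ∀ w₁ w₂ : HSp d T, ‖B w₁ - B w₂‖ ≤ C₀ * ‖w₁ - w₂‖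
  volterra : ∀ w : HSp d T,
    ∀ᵐ p ∂(fracMeas T).prod (fracMeas T),
      p.2 < p.1 → (B w : ℝ × ℝ → EuclideanSpace ℝ (Fin d)) p = 0
  causal : ∀ t : ℝ, 0 < t → t ≤ T → ∀ w₁ w₂ : HSp d T,
    (∀ᵐ ξ ∂fracMeas T, ξ < t →
        (w₁ : ℝ → EuclideanSpace ℝ (Fin d)) ξ = (w₂ : ℝ → EuclideanSpace ℝ (Fin d)) ξ) →
      ∀ᵐ r ∂fracMeas T, r < t →
        ∀ᵐ ξ ∂fracMeas T,
          (B w₁ : ℝ × ℝ → EuclideanSpace ℝ (Fin d)) (r, ξ) =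
            (B w₂ : ℝ × ℝ → EuclideanSpace ℝ (Fin d)) (r, ξ)

/-- `w` solves the Volterra fixed-point equation `E(s,t,ψ)`:
`w(ξ) = ψ(ξ) + ∫ₛᵗ B̄(w)(r,ξ) dr` for a.e. `ξ ∈ (0,T)`. -/
def SolvesE (d : ℕ) (T : ℝ) (B : HSp d T → HTen d T) (s t : ℝ)
    (ψ w : HSp d T) : Prop :=
  ∀ᵐ ξ ∂fracMeas T,
    (w : ℝ → EuclideanSpace ℝ (Fin d)) ξ =
      (ψ : ℝ → EuclideanSpace ℝ (Fin d)) ξ +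
        ∫ r in Set.Ioc s t, (B w : ℝ × ℝ → EuclideanSpace ℝ (Fin d)) (r, ξ)


/-- **Assumption (B2)**: `B̄` is Fréchet differentiable with derivative `DB̄ : H → ℒ(H; H_⊗)`
which is bounded (uniformly), `γ`-Hölder continuous, and satisfies the Volterra and causality
properties. -/
structure AssumptionB2 (d : ℕ) (T : ℝ) (B : HSp d T → HTen d T)
    (DB : HSp d T → HSp d T →L[ℝ] HTen d T) (C₀ γ : ℝ) : Prop where
  deriv : ∀ w : HSp d T, HasFDerivAt B (DB w) w
  bound : ∀ w η : HSp d T, ‖DB w η‖ ≤ C₀ * ‖η‖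
  holder : ∀ w₁ w₂ : HSp d T, ‖DB w₁ - DB w₂‖ ≤ C₀ * ‖w₁ - w₂‖ ^ γ
  volterra : ∀ w η : HSp d T,
    ∀ᵐ p ∂(fracMeas T).prod (fracMeas T),
      p.2 < p.1 → (DB w η : ℝ × ℝ → EuclideanSpace ℝ (Fin d)) p = 0
  causal : ∀ t : ℝ, 0 < t → t ≤ T → ∀ w₁ w₂ η₁ η₂ : HSp d T,
    (∀ᵐ ξ ∂fracMeas T, ξ < t →
        (w₁ : ℝ → EuclideanSpace ℝ (Fin d)) ξ = (w₂ : ℝ → EuclideanSpace ℝ (Fin d)) ξ) →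
      (∀ᵐ ξ ∂fracMeas T, ξ < t →
          (η₁ : ℝ → EuclideanSpace ℝ (Fin d)) ξ = (η₂ : ℝ → EuclideanSpace ℝ (Fin d)) ξ) →
        ∀ᵐ r ∂fracMeas T, r < t →
          ∀ᵐ ξ ∂fracMeas T,
            (DB w₁ η₁ : ℝ × ℝ → EuclideanSpace ℝ (Fin d)) (r, ξ) =
              (DB w₂ η₂ : ℝ × ℝ → EuclideanSpace ℝ (Fin d)) (r, ξ)

/-- `v` solves the linearized (first-variation) equation at the solution `S_{s,t}(ψ)` with
initial datum `η`: `v(ξ) = η(ξ) + ∫ₛᵗ (DB̄(S_{s,t}(ψ)) v)(r,ξ) dr` for a.e. `ξ ∈ (0,T)`. -/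
def SolvesLinE (d : ℕ) (T : ℝ) (DB : HSp d T → HSp d T →L[ℝ] HTen d T)
    (s t : ℝ) (wbase η v : HSp d T) : Prop :=
  ∀ᵐ ξ ∂fracMeas T,
    (v : ℝ → EuclideanSpace ℝ (Fin d)) ξ =
      (η : ℝ → EuclideanSpace ℝ (Fin d)) ξ +
        ∫ r in Set.Ioc s t, (DB wbase v : ℝ × ℝ → EuclideanSpace ℝ (Fin d)) (r, ξ)


open scoped ENNReal

/-! Write `E(s,t,ψ)` as `w = ψ + V (B̄ w)`, where `V F (ξ) = ∫ₛᵗ F(r, ξ) dr`. By the Volterra and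
causality properties, `V ∘ B̄` and its linearisation `K_w = V ∘ DB̄(w)` only see `w` on `(0, b)`
when evaluated on `(0, b)`, and their increments over a window `[a, b]` are of size
`√(b - a) C₀`. Cutting `(0, T)` into `N` windows with `√(T / N) C₀ ≤ 1 / 2` and absorbing window
by window gives, with `M = (2 + 2 √T C₀)ᴺ`, the a priori bounds `‖v‖ ≤ M ‖v - c K_w v‖`
(`0 ≤ c ≤ 1`) and `‖S ψ₁ - S ψ₂‖ ≤ M ‖ψ₁ - ψ₂‖`. The continuity method in `c` then inverts
`1 - K_w` with `‖(1 - K_w)⁻¹‖ ≤ M`. The derivative of `S` at `ψ` is `(1 - K_{S ψ})⁻¹`, because the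
Taylor remainder of `B̄` is `O(‖·‖^(1+γ))` by the Hölder bound on `DB̄`; and the identity
`(1 - K)⁻¹ - (1 - K')⁻¹ = (1 - K)⁻¹ (K - K') (1 - K')⁻¹` makes the derivative `γ`-Hölder. -/

section Abstract

variable {E : Type*} [NormedAddCommGroup E] [NormedSpace ℝ E]

/-- A discrete Gronwall argument: absorbing the `ε`-term gives
`‖P (i + 1) v‖ ≤ 2 ‖η‖ + 2 L ‖P i v‖`. -/
theorem norm_le_of_blockwise {N : ℕ} (P : ℕ → E →L[ℝ] E) (hP : ∀ i x, ‖P i x‖ ≤ ‖x‖)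
    {v η G : E} (hv : v = η + G) (hP0 : P 0 v = 0) (hPN : P N v = v) {L ε : ℝ} (hL : 0 ≤ L)
    (hε : ε ≤ 1 / 2) (hG : ∀ i < N, ‖P (i + 1) G‖ ≤ L * ‖P i v‖ + ε * ‖P (i + 1) v‖) :
    ‖v‖ ≤ (2 + 2 * L) ^ N * ‖η‖ := by
  have key : ∀ i ≤ N, ‖P i v‖ ≤ (2 + 2 * L) ^ i * ‖η‖ := by
    intro i
    induction i with
    | zero => simp [hP0]
    | succ i ih =>
      intro hi
      have hstep : ‖P (i + 1) v‖ ≤ ‖η‖ + (L * ‖P i v‖ + ε * ‖P (i + 1) v‖) :=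
        calc ‖P (i + 1) v‖ = ‖P (i + 1) η + P (i + 1) G‖ := by rw [hv, map_add]
          _ ≤ ‖η‖ + (L * ‖P i v‖ + ε * ‖P (i + 1) v‖) :=
            (norm_add_le _ _).trans (add_le_add (hP _ _) (hG i hi))
      have hpow : 1 ≤ (2 + 2 * L) ^ i := one_le_pow₀ (by linarith)
      have := ih (by omega)
      rw [pow_succ]
      nlinarith [norm_nonneg (P (i + 1) v), norm_nonneg η, norm_nonneg (P i v)]
  simpa [hPN] using key N le_rfl

theorem norm_inverse_le_of_forall_norm_le {U : E →L[ℝ] E} (hU : IsUnit U) {C : ℝ} (hC : 0 ≤ C)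
    (h : ∀ v, ‖v‖ ≤ C * ‖U v‖) : ‖Ring.inverse U‖ ≤ C := by
  refine ContinuousLinearMap.opNorm_le_bound _ hC fun y => ?_
  have hUU : U (Ring.inverse U y) = y := by
    rw [← mul_apply_eq_comp, Ring.mul_inverse_cancel U hU, one_apply_eq_self]
  simpa [hUU] using h (Ring.inverse U y)

/-- The continuity method: the uniform bound controls `‖(1 - c • A)⁻¹‖ ≤ C`, so invertibility
propagates from `c = 0` to `c = 1` in steps of size `1 / n < 1 / (C ‖A‖)`. -/
theorem isUnit_one_sub_of_forall_norm_le [CompleteSpace E] {A : E →L[ℝ] E} {C : ℝ} (hC : 0 ≤ C)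
    (h : ∀ c ∈ Set.Icc (0 : ℝ) 1, ∀ v, ‖v‖ ≤ C * ‖v - c • A v‖) : IsUnit (1 - A) := by
  set n : ℕ := ⌈C * ‖A‖⌉₊ + 1
  have hn : (0 : ℝ) < n := by positivity
  have hCA : C * ‖A‖ < n := (Nat.le_ceil _).trans_lt (by exact_mod_cast Nat.lt_succ_self _)
  suffices ∀ k ≤ n, IsUnit (1 - ((k : ℝ) / n) • A) by
    simpa [div_self hn.ne'] using this n le_rfl
  intro k
  induction k with
  | zero => simp
  | succ k ih =>
    intro hk
    obtain ⟨u, hu⟩ := ih (by omega)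
    have hc : (k : ℝ) / n ∈ Set.Icc (0 : ℝ) 1 :=
      ⟨by positivity, (div_le_one hn).2 (by exact_mod_cast (by omega : k ≤ n))⟩
    have hinv : ‖(↑u⁻¹ : E →L[ℝ] E)‖ ≤ C := by
      rw [← Ring.inverse_unit, hu]
      exact norm_inverse_le_of_forall_norm_le (hu ▸ u.isUnit) hC fun v => by simpa using h _ hc v
    have hsmall : ‖(↑u⁻¹ : E →L[ℝ] E) * ((1 / n : ℝ) • A)‖ < 1 :=
      calc _ ≤ C * ((1 / n) * ‖A‖) := by
            refine (norm_mul_le _ _).trans (mul_le_mul hinv ?_ (norm_nonneg _) hC)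
            rw [norm_smul, Real.norm_of_nonneg (by positivity)]
        _ = C * ‖A‖ / n := by ring
        _ < 1 := (div_lt_one hn).2 hCA
    refine ⟨u * Units.oneSub _ hsmall, ?_⟩
    rw [Units.val_mul, Units.val_oneSub, mul_sub, mul_one, ← mul_assoc, u.mul_inv, one_mul, hu,
      sub_sub, ← add_smul, ← add_div]
    push_cast
    rfl

theorem eq_add_iff_eq_inverse_one_sub {A : E →L[ℝ] E} (hA : IsUnit (1 - A)) {v η : E} :
    v = η + A v ↔ v = Ring.inverse (1 - A) η := by
  have hsub : v = η + A v ↔ (1 - A) v = η := by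
    rw [sub_apply, one_apply_eq_self, sub_eq_iff_eq_add]
  rw [hsub]
  constructor
  · rintro rfl
    rw [← mul_apply_eq_comp, Ring.inverse_mul_cancel _ hA, one_apply_eq_self]
  · rintro rfl
    rw [← mul_apply_eq_comp, Ring.mul_inverse_cancel _ hA, one_apply_eq_self]

theorem norm_inverse_one_sub_sub_le {R : Type*} [NormedRing R] {a b : R} (ha : IsUnit (1 - a))
    (hb : IsUnit (1 - b)) :
    ‖Ring.inverse (1 - a) - Ring.inverse (1 - b)‖
      ≤ ‖Ring.inverse (1 - a)‖ * ‖a - b‖ * ‖Ring.inverse (1 - b)‖ := by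
  rw [Ring.inverse_sub_inverse (iff_of_true ha hb), sub_sub_sub_cancel_left]
  exact (norm_mul_le _ _).trans (by gcongr; exact norm_mul_le _ _)

theorem norm_sub_sub_le_of_holder {F : Type*} [NormedAddCommGroup F] [NormedSpace ℝ F]
    {f : E → F} {f' : E → E →L[ℝ] F} (hf : ∀ x, HasFDerivAt f (f' x) x) {C γ : ℝ} (hC : 0 ≤ C)
    (hγ : 0 ≤ γ) (hf' : ∀ x y, ‖f' y - f' x‖ ≤ C * ‖y - x‖ ^ γ) (x y : E) :
    ‖f y - f x - f' x (y - x)‖ ≤ C * ‖y - x‖ ^ γ * ‖y - x‖ := by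
  refine Convex.norm_image_sub_le_of_norm_hasFDerivWithin_le' (𝕜 := ℝ)
    (fun z _ => (hf z).hasFDerivWithinAt) (fun z hz => ?_) (convex_segment x y)
    (left_mem_segment _ _ _) (right_mem_segment _ _ _)
  have hzx : ‖z - x‖ ≤ ‖y - x‖ := by
    rw [segment_eq_image_lineMap] at hz
    obtain ⟨θ, hθ, rfl⟩ := hz
    rw [AffineMap.lineMap_apply, vadd_eq_add, add_sub_cancel_right, norm_smul,
      Real.norm_of_nonneg hθ.1]
    exact mul_le_of_le_one_left (norm_nonneg _) hθ.2
  exact (hf' x z).trans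
    (mul_le_mul_of_nonneg_left (Real.rpow_le_rpow (norm_nonneg _) hzx hγ) hC)

theorem hasFDerivAt_of_norm_sub_sub_le {F : Type*} [NormedAddCommGroup F] [NormedSpace ℝ F]
    {f : E → F} {L : E →L[ℝ] F} {x : E} {C γ : ℝ} (hγ : 0 < γ)
    (h : ∀ h, ‖f (x + h) - f x - L h‖ ≤ C * ‖h‖ ^ γ * ‖h‖) : HasFDerivAt f L x := by
  rw [hasFDerivAt_iff_isLittleO_nhds_zero, Asymptotics.isLittleO_iff]
  intro c hc
  have hsmall : Filter.Tendsto (fun h : E => C * ‖h‖ ^ γ) (nhds 0) (nhds 0) := by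
    have hcont : Continuous fun h : E => C * ‖h‖ ^ γ :=
      continuous_const.mul (continuous_norm.rpow_const fun _ => Or.inr hγ.le)
    simpa [Real.zero_rpow hγ.ne'] using hcont.tendsto 0
  filter_upwards [hsmall.eventually_lt_const hc] with y hy
  exact (h y).trans (mul_le_mul_of_nonneg_right hy.le (norm_nonneg _))

theorem hasFDerivAt_of_eq_add_comp {Φ : E → E} {K : E → E →L[ℝ] E} {S : E → E} {M Λ γ : ℝ}
    (hM : 0 ≤ M) (hΛ : 0 ≤ Λ) (hγ : 0 < γ) (hΦ : ∀ x, HasFDerivAt Φ (K x) x)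
    (hK : ∀ x y, ‖K y - K x‖ ≤ Λ * ‖y - x‖ ^ γ) (hS : ∀ ψ, S ψ = ψ + Φ (S ψ))
    (hSlip : ∀ ψ₁ ψ₂, ‖S ψ₁ - S ψ₂‖ ≤ M * ‖ψ₁ - ψ₂‖) {ψ : E} (hunit : IsUnit (1 - K (S ψ)))
    (hR : ‖Ring.inverse (1 - K (S ψ))‖ ≤ M) :
    HasFDerivAt S (Ring.inverse (1 - K (S ψ))) ψ := by
  set R := Ring.inverse (1 - K (S ψ))
  refine hasFDerivAt_of_norm_sub_sub_le (C := M * Λ * M ^ γ * M) hγ fun h => ?_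
  set δ := S (ψ + h) - S ψ
  have hδ : ‖δ‖ ≤ M * ‖h‖ := by simpa using hSlip (ψ + h) ψ
  -- `1 - K (S ψ)` maps the remainder of `S` to the remainder of `Φ`.
  have hrem : δ - R h = R (Φ (S (ψ + h)) - Φ (S ψ) - K (S ψ) δ) := by
    have hδh : δ - h = Φ (S (ψ + h)) - Φ (S ψ) := by
      simp only [δ]; nth_rw 1 [hS (ψ + h), hS ψ]; abel
    have hleft : ∀ v, R ((1 - K (S ψ)) v) = v := fun v => by
      rw [← mul_apply_eq_comp, Ring.inverse_mul_cancel _ hunit, one_apply_eq_self]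
    have hright : (1 - K (S ψ)) (R h) = h := by
      rw [← mul_apply_eq_comp, Ring.mul_inverse_cancel _ hunit, one_apply_eq_self]
    calc δ - R h = R ((1 - K (S ψ)) (δ - R h)) := (hleft _).symm
      _ = _ := by
        rw [map_sub, hright, sub_apply, one_apply_eq_self, ← hδh]
        congr 1; abel
  calc ‖δ - R h‖ ≤ M * (Λ * ‖δ‖ ^ γ * ‖δ‖) := by
        rw [hrem]
        exact (ContinuousLinearMap.le_of_opNorm_le _ hR _).trans (by
          gcongr; exact norm_sub_sub_le_of_holder hΦ hΛ hγ.le hK _ _)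
    _ ≤ M * (Λ * (M * ‖h‖) ^ γ * (M * ‖h‖)) := by gcongr
    _ = M * Λ * M ^ γ * M * ‖h‖ ^ γ * ‖h‖ := by
        rw [Real.mul_rpow hM (norm_nonneg _)]; ring

theorem exists_sqrt_div_mul_le (T L : ℝ) {ε : ℝ} (hε : 0 < ε) :
    ∃ N : ℕ, 0 < N ∧ √(T / N) * L ≤ ε := by
  have h : Filter.Tendsto (fun N : ℕ => √(T / N) * L) Filter.atTop (nhds 0) := by
    simpa using ((Real.continuous_sqrt.tendsto 0).comp
      (tendsto_const_div_atTop_nhds_zero_nat T)).mul_const L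
  exact ((h.eventually (ge_mem_nhds hε)).and (Filter.eventually_gt_atTop 0)).exists.imp
    fun _ hN => ⟨hN.2, hN.1⟩

theorem rpow_mul_le_mul_rpow {M x γ : ℝ} (hM : 1 ≤ M) (hx : 0 ≤ x) (hγ1 : γ ≤ 1) :
    (M * x) ^ γ ≤ M * x ^ γ := by
  rw [Real.mul_rpow (zero_le_one.trans hM) hx]
  gcongr
  exact Real.rpow_le_self_of_one_le hM hγ1

end Abstract

theorem MeasureTheory.Lp.norm_le_of_ae_eq_indicator {α E : Type*} [MeasurableSpace α]
    [NormedAddCommGroup E] {p : ℝ≥0∞} {μ : Measure α} {s : Set α} {f g : Lp E p μ}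
    (h : g =ᵐ[μ] s.indicator f) : ‖g‖ ≤ ‖f‖ := by
  rw [Lp.norm_def, Lp.norm_def, eLpNorm_congr_ae h]
  exact ENNReal.toReal_mono (Lp.eLpNorm_ne_top f) (eLpNorm_indicator_le _)

theorem enorm_integral_sq_le {α E : Type*} [MeasurableSpace α] [NormedAddCommGroup E]
    [NormedSpace ℝ E] (ν : Measure α) {g : α → E} (hg : AEStronglyMeasurable g ν) :
    ‖∫ x, g x ∂ν‖ₑ ^ 2 ≤ ν Set.univ * ∫⁻ x, ‖g x‖ₑ ^ 2 ∂ν := by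
  have hCS := ENNReal.lintegral_mul_le_Lp_mul_Lq ν Real.HolderConjugate.two_two hg.enorm
    aemeasurable_const (g := fun _ => (1 : ℝ≥0∞))
  simp only [Pi.mul_apply, mul_one, ENNReal.one_rpow, lintegral_one] at hCS
  calc ‖∫ x, g x ∂ν‖ₑ ^ 2 ≤ (∫⁻ x, ‖g x‖ₑ ∂ν) ^ 2 := by
        gcongr; exact enorm_integral_le_lintegral_enorm g
    _ ≤ ((∫⁻ x, ‖g x‖ₑ ^ (2 : ℝ) ∂ν) ^ (1 / 2 : ℝ) * ν Set.univ ^ (1 / 2 : ℝ)) ^ 2 := by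
        gcongr
    _ = ν Set.univ * ∫⁻ x, ‖g x‖ₑ ^ 2 ∂ν := by
        rw [mul_pow, ← ENNReal.rpow_natCast, ← ENNReal.rpow_natCast, ← ENNReal.rpow_mul,
          ← ENNReal.rpow_mul]
        norm_num [mul_comm]

theorem eLpNorm_two_eq_lintegral {α E : Type*} [MeasurableSpace α] [NormedAddCommGroup E]
    {ν : Measure α} (f : α → E) : eLpNorm f 2 ν = (∫⁻ x, ‖f x‖ₑ ^ 2 ∂ν) ^ (1 / 2 : ℝ) := by
  rw [eLpNorm_eq_lintegral_rpow_enorm_toReal two_ne_zero ENNReal.ofNat_ne_top]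
  norm_num

theorem MeasureTheory.Measure.ae_ae_swap_of_ae_prod {α β : Type*} [MeasurableSpace α]
    [MeasurableSpace β] {μ : Measure α} {ν : Measure β} [SFinite μ] [SFinite ν] {P : α × β → Prop}
    (h : ∀ᵐ p ∂μ.prod ν, P p) : ∀ᵐ y ∂ν, ∀ᵐ x ∂μ, P (x, y) := by
  rw [← Measure.prod_swap] at h
  exact Measure.ae_ae_of_ae_prod (ae_of_ae_map measurable_swap.aemeasurable h)

section Cutoff

variable {E : Type*} [NormedAddCommGroup E] [NormedSpace ℝ E] {p : ℝ≥0∞} [Fact (1 ≤ p)]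
  {μ : Measure ℝ}

def cutoff (a : ℝ) : Lp E p μ →L[ℝ] Lp E p μ :=
  LinearMap.mkContinuous
    { toFun := fun f => ((Lp.memLp f).indicator (measurableSet_Iio (a := a))).toLp _
      map_add' := fun f g => by
        rw [← MemLp.toLp_add]
        refine MemLp.toLp_congr _ _ ?_
        filter_upwards [Lp.coeFn_add f g] with x hx
        simp only [Set.indicator_apply, Set.mem_Iio, hx, Pi.add_apply]
        split_ifs <;> simp
      map_smul' := fun c f => by
        rw [RingHom.id_apply, ← MemLp.toLp_const_smul]
        refine MemLp.toLp_congr _ _ ?_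
        filter_upwards [Lp.coeFn_smul c f] with x hx
        simp only [Set.indicator_apply, Set.mem_Iio, hx, Pi.smul_apply]
        split_ifs <;> simp }
    1 fun f => by
      simp only [LinearMap.coe_mk, AddHom.coe_mk, one_mul]
      rw [Lp.norm_toLp, Lp.norm_def]
      exact ENNReal.toReal_mono (Lp.eLpNorm_ne_top f) (eLpNorm_indicator_le _)

theorem cutoff_apply (a : ℝ) (f : Lp E p μ) :
    cutoff a f = ((Lp.memLp f).indicator (measurableSet_Iio (a := a))).toLp _ := rfl

theorem coeFn_cutoff (a : ℝ) (f : Lp E p μ) : cutoff a f =ᵐ[μ] (Set.Iio a).indicator f := by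
  rw [cutoff_apply]
  exact MemLp.coeFn_toLp _

theorem norm_cutoff_le (a : ℝ) (f : Lp E p μ) : ‖cutoff a f‖ ≤ ‖f‖ :=
  Lp.norm_le_of_ae_eq_indicator (coeFn_cutoff a f)

theorem cutoff_cutoff (a b : ℝ) (f : Lp E p μ) : cutoff a (cutoff b f) = cutoff (min a b) f := by
  refine Lp.ext ?_
  filter_upwards [coeFn_cutoff a (cutoff b f), coeFn_cutoff b f, coeFn_cutoff (min a b) f]
    with x h₁ h₂ h₃
  simp only [h₁, h₃, Set.indicator_apply, Set.mem_Iio, lt_min_iff]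
  split_ifs <;> simp_all

theorem norm_sub_cutoff_le (a : ℝ) (f : Lp E p μ) : ‖f - cutoff a f‖ ≤ ‖f‖ := by
  refine Lp.norm_le_of_ae_eq_indicator (s := (Set.Iio a)ᶜ) ?_
  filter_upwards [Lp.coeFn_sub f (cutoff a f), coeFn_cutoff a f] with x h₁ h₂
  rw [h₁, Pi.sub_apply, h₂, Set.indicator_compl, Pi.sub_apply]

theorem ae_eq_of_cutoff_eq {a : ℝ} {f g : Lp E p μ} (h : cutoff a f = cutoff a g) :
    ∀ᵐ x ∂μ, x < a → f x = g x := by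
  filter_upwards [coeFn_cutoff a f, coeFn_cutoff a g, Lp.ext_iff.1 h] with x hf hg hfg hx
  simpa [hf, hg, Set.indicator_of_mem (Set.mem_Iio.2 hx)] using hfg

theorem cutoff_eq_zero {a : ℝ} (ha : ∀ᵐ x ∂μ, a ≤ x) (f : Lp E p μ) : cutoff a f = 0 := by
  refine Lp.ext ?_
  filter_upwards [coeFn_cutoff a f, Lp.coeFn_zero E p μ, ha] with x h₁ h₂ hx
  rw [h₁, h₂, Set.indicator_of_notMem (by simpa using hx)]
  rfl

theorem cutoff_eq_self {a : ℝ} (ha : ∀ᵐ x ∂μ, x < a) (f : Lp E p μ) : cutoff a f = f := by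
  refine Lp.ext ?_
  filter_upwards [coeFn_cutoff a f, ha] with x h₁ hx
  rw [h₁, Set.indicator_of_mem (Set.mem_Iio.2 hx)]

end Cutoff

section KernelIntegral

variable {E : Type*} [NormedAddCommGroup E] {T : ℝ}

def IsVolterraKernel (F : Lp E 2 ((fracMeas T).prod (fracMeas T))) : Prop :=
  ∀ᵐ p ∂(fracMeas T).prod (fracMeas T), p.2 < p.1 → F p = 0

def KernelVanishesBelow (a : ℝ) (F : Lp E 2 ((fracMeas T).prod (fracMeas T))) : Prop :=
  ∀ᵐ p ∂(fracMeas T).prod (fracMeas T), p.1 < a → F p = 0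

variable (I : Set ℝ)

theorem integrable_restrict_prod (F : Lp E 2 ((fracMeas T).prod (fracMeas T))) :
    Integrable F (((fracMeas T).restrict I).prod (fracMeas T)) :=
  ((Lp.memLp F).integrable one_le_two).mono_measure
    (Measure.prod_mono Measure.restrict_le_self le_rfl)

theorem eLpNorm_le_of_enorm_sq_le (F : Lp E 2 ((fracMeas T).prod (fracMeas T)))
    {g : ℝ → E} {c : ℝ}
    (h : ∀ᵐ ξ ∂fracMeas T, ‖g ξ‖ₑ ^ 2 ≤ ENNReal.ofReal c * ∫⁻ r, ‖F (r, ξ)‖ₑ ^ 2 ∂fracMeas T) :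
    eLpNorm g 2 (fracMeas T)
      ≤ ENNReal.ofReal c ^ (1 / 2 : ℝ) * eLpNorm F 2 ((fracMeas T).prod (fracMeas T)) := by
  have hF : AEMeasurable (fun p => ‖F p‖ₑ ^ 2) ((fracMeas T).prod (fracMeas T)) :=
    (Lp.aestronglyMeasurable F).enorm.pow_const 2
  have hint : ∫⁻ ξ, ‖g ξ‖ₑ ^ 2 ∂fracMeas T
      ≤ ENNReal.ofReal c * ∫⁻ p, ‖F p‖ₑ ^ 2 ∂(fracMeas T).prod (fracMeas T) :=
    calc ∫⁻ ξ, ‖g ξ‖ₑ ^ 2 ∂fracMeas T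
        ≤ ∫⁻ ξ, ENNReal.ofReal c * ∫⁻ r, ‖F (r, ξ)‖ₑ ^ 2 ∂fracMeas T ∂fracMeas T :=
          lintegral_mono_ae h
      _ = ENNReal.ofReal c * ∫⁻ ξ, ∫⁻ r, ‖F (r, ξ)‖ₑ ^ 2 ∂fracMeas T ∂fracMeas T :=
          lintegral_const_mul' _ _ ENNReal.ofReal_ne_top
      _ = _ := by
          rw [lintegral_lintegral_swap (by
            exact (Measure.measurePreserving_swap.aemeasurable_comp_iff
              MeasurableEquiv.prodComm.measurableEmbedding).2 hF), lintegral_lintegral hF]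
  rw [eLpNorm_two_eq_lintegral, eLpNorm_two_eq_lintegral,
    ← ENNReal.mul_rpow_of_nonneg _ _ (by norm_num)]
  gcongr

theorem toReal_eLpNorm_le_of_enorm_sq_le (F : Lp E 2 ((fracMeas T).prod (fracMeas T)))
    {g : ℝ → E} {c : ℝ}
    (h : ∀ᵐ ξ ∂fracMeas T, ‖g ξ‖ₑ ^ 2 ≤ ENNReal.ofReal c * ∫⁻ r, ‖F (r, ξ)‖ₑ ^ 2 ∂fracMeas T) :
    (eLpNorm g 2 (fracMeas T)).toReal ≤ √c * ‖F‖ :=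
  calc (eLpNorm g 2 (fracMeas T)).toReal
      ≤ (ENNReal.ofReal c ^ (1 / 2 : ℝ) * eLpNorm F 2 ((fracMeas T).prod (fracMeas T))).toReal :=
        ENNReal.toReal_mono (ENNReal.mul_ne_top (by finiteness) (Lp.eLpNorm_ne_top F))
          (eLpNorm_le_of_enorm_sq_le F h)
    _ = √c * ‖F‖ := by
        rw [ENNReal.toReal_mul, ← ENNReal.toReal_rpow, ← Real.sqrt_eq_rpow,
          ENNReal.toReal_ofReal', Lp.norm_def]
        rcases le_total c 0 with h | h
        · simp [h, Real.sqrt_eq_zero'.2 h]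
        · rw [max_eq_left h]

theorem IsVolterraKernel.sub {F G : Lp E 2 ((fracMeas T).prod (fracMeas T))}
    (hF : IsVolterraKernel F) (hG : IsVolterraKernel G) : IsVolterraKernel (F - G) := by
  filter_upwards [hF, hG, Lp.coeFn_sub F G] with p h₁ h₂ h₃ hp
  rw [h₃, Pi.sub_apply, h₁ hp, h₂ hp, sub_self]

theorem kernelVanishesBelow_of_ae_ae {a : ℝ} {F : Lp E 2 ((fracMeas T).prod (fracMeas T))}
    (h : ∀ᵐ r ∂fracMeas T, r < a → ∀ᵐ ξ ∂fracMeas T, F (r, ξ) = 0) :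
    KernelVanishesBelow a F := by
  have hF := Lp.aestronglyMeasurable F
  have hmeas : MeasurableSet {p : ℝ × ℝ | p.1 < a → hF.mk F p = 0} :=
    (measurableSet_lt measurable_fst measurable_const).imp
      (hF.stronglyMeasurable_mk.measurableSet_eq_fun stronglyMeasurable_const)
  have hmk : ∀ᵐ p ∂(fracMeas T).prod (fracMeas T), p.1 < a → hF.mk F p = 0 := by
    rw [Measure.ae_prod_iff_ae_ae hmeas]
    filter_upwards [h, Measure.ae_ae_of_ae_prod hF.ae_eq_mk] with r hr hrmk
    by_cases hra : r < a
    · filter_upwards [hr hra, hrmk] with ξ h₁ h₂ _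
      rw [← h₂, h₁]
    · exact ae_of_all _ fun _ h => absurd h hra
  filter_upwards [hmk, hF.ae_eq_mk] with p hp hpe hpa
  rw [hpe, hp hpa]

theorem kernelVanishesBelow_sub_of_ae_ae {a : ℝ}
    {F G : Lp E 2 ((fracMeas T).prod (fracMeas T))}
    (h : 0 < a → ∀ᵐ r ∂fracMeas T, r < a → ∀ᵐ ξ ∂fracMeas T, F (r, ξ) = G (r, ξ)) :
    KernelVanishesBelow a (F - G) := by
  refine kernelVanishesBelow_of_ae_ae ?_
  rcases le_or_gt a 0 with ha | ha
  · filter_upwards [ae_restrict_mem measurableSet_Ioo] with r hr hra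
    exact absurd (hr.1.trans hra) ha.not_gt
  · filter_upwards [h ha, Measure.ae_ae_of_ae_prod (Lp.coeFn_sub F G)] with r hr hsub hra
    filter_upwards [hr hra, hsub] with ξ h₁ h₂
    rw [h₂, Pi.sub_apply, h₁, sub_self]

variable [NormedSpace ℝ E]

def partialIntegral (F : Lp E 2 ((fracMeas T).prod (fracMeas T))) (ξ : ℝ) : E :=
  ∫ r in I, F (r, ξ) ∂fracMeas T

theorem aestronglyMeasurable_partialIntegral (F : Lp E 2 ((fracMeas T).prod (fracMeas T))) :
    AEStronglyMeasurable (partialIntegral I F) (fracMeas T) := by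
  have hswap : AEStronglyMeasurable (F ∘ Prod.swap)
      ((fracMeas T).prod ((fracMeas T).restrict I)) := by
    rw [Measure.measurePreserving_swap.aestronglyMeasurable_comp_iff
      MeasurableEquiv.prodComm.measurableEmbedding]
    exact (integrable_restrict_prod I F).aestronglyMeasurable
  exact hswap.integral_prod_right'

theorem enorm_partialIntegral_sq_le (F : Lp E 2 ((fracMeas T).prod (fracMeas T))) :
    ∀ᵐ ξ ∂fracMeas T,
      ‖partialIntegral I F ξ‖ₑ ^ 2 ≤ ENNReal.ofReal T * ∫⁻ r, ‖F (r, ξ)‖ₑ ^ 2 ∂fracMeas T := by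
  filter_upwards [(integrable_restrict_prod I F).prod_left_ae] with ξ hint
  refine (enorm_integral_sq_le _ hint.aestronglyMeasurable).trans
    (mul_le_mul' ?_ (lintegral_mono' Measure.restrict_le_self le_rfl))
  calc (fracMeas T).restrict I Set.univ ≤ fracMeas T Set.univ := Measure.restrict_le_self _
    _ = ENNReal.ofReal T := by simp

/-- For `ξ < b`, the fibre `r ↦ F(r, ξ)` of a Volterra kernel vanishing below `a` lives on
`[a, ξ] ⊆ [a, b]`. -/
theorem enorm_indicator_partialIntegral_sq_le {a b : ℝ}
    {F : Lp E 2 ((fracMeas T).prod (fracMeas T))} (hvol : IsVolterraKernel F)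
    (hvan : KernelVanishesBelow a F) :
    ∀ᵐ ξ ∂fracMeas T, ‖(Set.Iio b).indicator (partialIntegral I F) ξ‖ₑ ^ 2
      ≤ ENNReal.ofReal (b - a) * ∫⁻ r, ‖F (r, ξ)‖ₑ ^ 2 ∂fracMeas T := by
  filter_upwards [Measure.ae_ae_swap_of_ae_prod (hvol.and hvan),
    (integrable_restrict_prod I F).prod_left_ae] with ξ hξ hint
  by_cases hb : ξ < b
  swap
  · simp [Set.indicator_of_notMem (show ξ ∉ Set.Iio b from hb)]
  set ν := (fracMeas T).restrict I
  have hsupp : (fun r => F (r, ξ)) =ᵐ[ν] (Set.Icc a ξ).indicator fun r => F (r, ξ) := by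
    refine ae_restrict_of_ae ?_
    filter_upwards [hξ] with r hr
    by_cases hmem : r ∈ Set.Icc a ξ
    · rw [Set.indicator_of_mem hmem]
    · rw [Set.indicator_of_notMem hmem]
      rcases not_and_or.1 hmem with h | h
      · exact hr.2 (lt_of_not_ge h)
      · exact hr.1 (lt_of_not_ge h)
  have hJ : partialIntegral I F ξ = ∫ r, F (r, ξ) ∂ν.restrict (Set.Icc a ξ) := by
    rw [partialIntegral, integral_congr_ae hsupp, integral_indicator measurableSet_Icc]
  rw [Set.indicator_of_mem (Set.mem_Iio.2 hb), hJ]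
  refine (enorm_integral_sq_le _ hint.restrict.aestronglyMeasurable).trans
    (mul_le_mul' ?_ (lintegral_mono' (Measure.restrict_le_self.trans Measure.restrict_le_self)
      le_rfl))
  calc ν.restrict (Set.Icc a ξ) Set.univ ≤ volume (Set.Icc a ξ) := by
        rw [Measure.restrict_apply_univ]
        exact (Measure.restrict_le_self _).trans (Measure.restrict_le_self _)
    _ = ENNReal.ofReal (ξ - a) := Real.volume_Icc
    _ ≤ ENNReal.ofReal (b - a) := ENNReal.ofReal_le_ofReal (by linarith)

theorem partialIntegral_add (F G : Lp E 2 ((fracMeas T).prod (fracMeas T))) :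
    partialIntegral I (F + G) =ᵐ[fracMeas T] partialIntegral I F + partialIntegral I G := by
  filter_upwards [Measure.ae_ae_swap_of_ae_prod (Lp.coeFn_add F G),
    (integrable_restrict_prod I F).prod_left_ae, (integrable_restrict_prod I G).prod_left_ae]
    with ξ hξ hF hG
  rw [partialIntegral, integral_congr_ae (ae_restrict_of_ae hξ)]
  exact integral_add hF hG

theorem partialIntegral_smul (c : ℝ) (F : Lp E 2 ((fracMeas T).prod (fracMeas T))) :
    partialIntegral I (c • F) =ᵐ[fracMeas T] c • partialIntegral I F := by
  filter_upwards [Measure.ae_ae_swap_of_ae_prod (Lp.coeFn_smul c F)] with ξ hξ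
  rw [partialIntegral, integral_congr_ae (ae_restrict_of_ae hξ)]
  exact integral_smul c _

theorem memLp_partialIntegral (F : Lp E 2 ((fracMeas T).prod (fracMeas T))) :
    MemLp (partialIntegral I F) 2 (fracMeas T) := by
  refine ⟨aestronglyMeasurable_partialIntegral I F, ?_⟩
  exact (eLpNorm_le_of_enorm_sq_le F (enorm_partialIntegral_sq_le I F)).trans_lt
    (ENNReal.mul_lt_top (by finiteness) (Lp.eLpNorm_lt_top F))

def kernelIntegral : Lp E 2 ((fracMeas T).prod (fracMeas T)) →L[ℝ] Lp E 2 (fracMeas T) :=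
  LinearMap.mkContinuous
    { toFun := fun F => (memLp_partialIntegral I F).toLp
      map_add' := fun F G => by
        rw [← MemLp.toLp_add]
        exact MemLp.toLp_congr _ _ (partialIntegral_add I F G)
      map_smul' := fun c F => by
        rw [RingHom.id_apply, ← MemLp.toLp_const_smul]
        exact MemLp.toLp_congr _ _ (partialIntegral_smul I c F) }
    √T fun F => by
      simp only [LinearMap.coe_mk, AddHom.coe_mk]
      rw [Lp.norm_toLp]
      exact toReal_eLpNorm_le_of_enorm_sq_le F (enorm_partialIntegral_sq_le I F)

theorem kernelIntegral_apply (F : Lp E 2 ((fracMeas T).prod (fracMeas T))) :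
    kernelIntegral I F = (memLp_partialIntegral I F).toLp := rfl

theorem coeFn_kernelIntegral (F : Lp E 2 ((fracMeas T).prod (fracMeas T))) :
    kernelIntegral I F =ᵐ[fracMeas T] partialIntegral I F := by
  rw [kernelIntegral_apply]
  exact MemLp.coeFn_toLp _

theorem norm_kernelIntegral_le (F : Lp E 2 ((fracMeas T).prod (fracMeas T))) :
    ‖kernelIntegral I F‖ ≤ √T * ‖F‖ := by
  rw [kernelIntegral_apply, Lp.norm_toLp]
  exact toReal_eLpNorm_le_of_enorm_sq_le F (enorm_partialIntegral_sq_le I F)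

theorem opNorm_kernelIntegral_le : ‖kernelIntegral (E := E) (T := T) I‖ ≤ √T :=
  ContinuousLinearMap.opNorm_le_bound _ (Real.sqrt_nonneg T) fun F => norm_kernelIntegral_le I F

theorem norm_cutoff_kernelIntegral_le {a b : ℝ} {F : Lp E 2 ((fracMeas T).prod (fracMeas T))}
    (hvol : IsVolterraKernel F) (hvan : KernelVanishesBelow a F) :
    ‖cutoff b (kernelIntegral I F)‖ ≤ √(b - a) * ‖F‖ := by
  have h : cutoff b (kernelIntegral I F) =ᵐ[fracMeas T]
      (Set.Iio b).indicator (partialIntegral I F) := by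
    filter_upwards [coeFn_cutoff b (kernelIntegral I F), coeFn_kernelIntegral I F] with ξ h₁ h₂
    rw [h₁]
    by_cases hξ : ξ ∈ Set.Iio b
    · rw [Set.indicator_of_mem hξ, Set.indicator_of_mem hξ, h₂]
    · rw [Set.indicator_of_notMem hξ, Set.indicator_of_notMem hξ]
  rw [Lp.norm_def, eLpNorm_congr_ae h]
  exact toReal_eLpNorm_le_of_enorm_sq_le F (enorm_indicator_partialIntegral_sq_le I hvol hvan)

theorem partialIntegral_Ioc {s t : ℝ} (h0s : 0 ≤ s) (htT : t ≤ T)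
    (F : Lp E 2 ((fracMeas T).prod (fracMeas T))) (ξ : ℝ) :
    partialIntegral (Set.Ioc s t) F ξ = ∫ r in Set.Ioc s t, F (r, ξ) := by
  have hsub : Set.Ioo s t ⊆ Set.Ioc s t ∩ Set.Ioo 0 T :=
    Set.subset_inter Set.Ioo_subset_Ioc_self (Set.Ioo_subset_Ioo h0s htT)
  have hIoc : (Set.Ioc s t ∩ Set.Ioo 0 T : Set ℝ) =ᵐ[volume] Set.Ioc s t :=
    Set.inter_subset_left.eventuallyLE.antisymm (Ioo_ae_eq_Ioc.symm.le.trans hsub.eventuallyLE)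
  rw [partialIntegral, Measure.restrict_restrict measurableSet_Ioc]
  exact setIntegral_congr_set hIoc

theorem eq_add_kernelIntegral_iff {s t : ℝ} (h0s : 0 ≤ s) (htT : t ≤ T)
    {f g : Lp E 2 (fracMeas T)} {F : Lp E 2 ((fracMeas T).prod (fracMeas T))} :
    f = g + kernelIntegral (Set.Ioc s t) F ↔
      ∀ᵐ ξ ∂fracMeas T, f ξ = g ξ + ∫ r in Set.Ioc s t, F (r, ξ) := by
  rw [Lp.ext_iff]
  constructor <;> intro h <;>
  · filter_upwards [h, Lp.coeFn_add g (kernelIntegral (Set.Ioc s t) F),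
      coeFn_kernelIntegral (Set.Ioc s t) F] with ξ h₁ h₂ h₃
    rw [h₁, h₂, Pi.add_apply, h₃, partialIntegral_Ioc h0s htT]

end KernelIntegral

section CausalLipschitz

variable {E : Type*} [NormedAddCommGroup E] [NormedSpace ℝ E] {T : ℝ}

theorem cutoff_zero_fracMeas (f : Lp E 2 (fracMeas T)) : cutoff 0 f = 0 :=
  cutoff_eq_zero (by filter_upwards [ae_restrict_mem measurableSet_Ioo] with x hx using hx.1.le) f

theorem cutoff_fracMeas_self (f : Lp E 2 (fracMeas T)) : cutoff T f = f :=
  cutoff_eq_self (by filter_upwards [ae_restrict_mem measurableSet_Ioo] with x hx using hx.2) f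

/-- For `b ≤ a` the bound is `0`, since `Real.sqrt` vanishes on `(-∞, 0]`: this is causality. -/
def CausalLipschitz (Φ : Lp E 2 (fracMeas T) → Lp E 2 (fracMeas T)) (L : ℝ) : Prop :=
  ∀ a b : ℝ, a ≤ T → ∀ w₁ w₂, cutoff a w₁ = cutoff a w₂ →
    ‖cutoff b (Φ w₁ - Φ w₂)‖ ≤ √(b - a) * L * ‖w₁ - w₂‖

variable {Φ : Lp E 2 (fracMeas T) → Lp E 2 (fracMeas T)} {L : ℝ}

/-- Passing from `w₂` to `w₁` through the functions that agree with `w₁` up to `a` and up to `b`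
splits the increment into a part seen only up to `a`, one of size `√(b - a)` and one that
vanishes by causality. -/
theorem CausalLipschitz.norm_cutoff_sub_le (hΦ : CausalLipschitz Φ L) (hL : 0 ≤ L) {a b : ℝ}
    (h0a : 0 ≤ a) (hab : a ≤ b) (hbT : b ≤ T) (w₁ w₂ : Lp E 2 (fracMeas T)) :
    ‖cutoff b (Φ w₁ - Φ w₂)‖
      ≤ √T * L * ‖cutoff a (w₁ - w₂)‖ + √(b - a) * L * ‖cutoff b (w₁ - w₂)‖ := by
  set v := w₁ - w₂
  set wa := w₂ + cutoff a v
  set wb := w₂ + cutoff b v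
  have hw₁ : w₁ = w₂ + v := by simp [v]
  have hb : cutoff b w₁ = cutoff b wb := by
    rw [map_add, cutoff_cutoff, min_self, ← map_add, ← hw₁]
  have ha : cutoff a wb = cutoff a wa := by
    rw [map_add, map_add, cutoff_cutoff, cutoff_cutoff, min_eq_left hab, min_self]
  have h0 : cutoff 0 wa = cutoff 0 w₂ := by rw [cutoff_zero_fracMeas, cutoff_zero_fracMeas]
  have hsplit : cutoff b (Φ w₁ - Φ w₂) = cutoff b (Φ w₁ - Φ wb) + cutoff b (Φ wb - Φ wa)
      + cutoff b (Φ wa - Φ w₂) := by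
    rw [← map_add, ← map_add]; congr 1; abel
  have hba : ‖wb - wa‖ ≤ ‖cutoff b v‖ := by
    have : wb - wa = cutoff b v - cutoff a (cutoff b v) := by
      rw [cutoff_cutoff, min_eq_left hab]; simp only [wa, wb]; abel
    rw [this]
    exact norm_sub_cutoff_le a _
  have hwa : ‖wa - w₂‖ = ‖cutoff a v‖ := by simp [wa]
  calc ‖cutoff b (Φ w₁ - Φ w₂)‖
      ≤ √(b - b) * L * ‖w₁ - wb‖ + √(b - a) * L * ‖wb - wa‖ + √(b - 0) * L * ‖wa - w₂‖ := by
        rw [hsplit]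
        refine (norm_add₃_le).trans (add_le_add_three ?_ ?_ ?_)
        · exact hΦ b b hbT w₁ wb hb
        · exact hΦ a b (hab.trans hbT) wb wa ha
        · exact hΦ 0 b (h0a.trans (hab.trans hbT)) wa w₂ h0
    _ ≤ 0 + √(b - a) * L * ‖cutoff b v‖ + √T * L * ‖cutoff a v‖ := by
        rw [sub_self, Real.sqrt_zero, zero_mul, zero_mul, hwa, sub_zero]
        gcongr
    _ = _ := by ring

theorem CausalLipschitz.norm_sub_le (hΦ : CausalLipschitz Φ L) (hL : 0 ≤ L) (hT : 0 < T)
    {N : ℕ} (hN : 0 < N) (hδ : √(T / N) * L ≤ 1 / 2) {c : ℝ} (hc : |c| ≤ 1)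
    {w₁ w₂ η : Lp E 2 (fracMeas T)} (h : w₁ - w₂ = η + c • (Φ w₁ - Φ w₂)) :
    ‖w₁ - w₂‖ ≤ (2 + 2 * (√T * L)) ^ N * ‖η‖ := by
  have hδ0 : 0 ≤ T / N := by positivity
  have hNT : (N : ℝ) * (T / N) = T := mul_div_cancel₀ T (Nat.cast_ne_zero.2 hN.ne')
  refine norm_le_of_blockwise (fun i => cutoff (i * (T / N))) (fun i => norm_cutoff_le _) h
    ?_ ?_ (by positivity) hδ fun i hi => ?_
  · simp only [Nat.cast_zero, zero_mul]
    exact cutoff_zero_fracMeas _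
  · simp only [hNT]
    exact cutoff_fracMeas_self _
  have hiN : ((i : ℝ) + 1) * (T / N) ≤ T := by
    calc ((i : ℝ) + 1) * (T / N) ≤ N * (T / N) := by gcongr; exact_mod_cast hi
      _ = T := hNT
  have hblock := hΦ.norm_cutoff_sub_le hL (a := i * (T / N)) (by positivity)
    (by gcongr; linarith) hiN w₁ w₂
  rw [show ((i : ℝ) + 1) * (T / N) - i * (T / N) = T / N by ring] at hblock
  simp only [Nat.cast_add, Nat.cast_one, map_smul, norm_smul, Real.norm_eq_abs]
  exact (mul_le_of_le_one_left (norm_nonneg _) hc).trans hblock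

end CausalLipschitz

section Drift

variable {d : ℕ} {T : ℝ} {B : HSp d T → HTen d T} {DB : HSp d T → HSp d T →L[ℝ] HTen d T}
  {C₀ γ : ℝ} (I : Set ℝ)

theorem AssumptionB1.kernelVanishesBelow_sub (hB1 : AssumptionB1 d T B C₀) {a : ℝ} (haT : a ≤ T)
    {w₁ w₂ : HSp d T} (h : cutoff a w₁ = cutoff a w₂) :
    KernelVanishesBelow a (B w₁ - B w₂) :=
  kernelVanishesBelow_sub_of_ae_ae fun ha => hB1.causal a ha haT w₁ w₂ (ae_eq_of_cutoff_eq h)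

theorem AssumptionB2.kernelVanishesBelow_sub (hB2 : AssumptionB2 d T B DB C₀ γ) {a : ℝ}
    (haT : a ≤ T) (w : HSp d T) {v₁ v₂ : HSp d T} (h : cutoff a v₁ = cutoff a v₂) :
    KernelVanishesBelow a (DB w v₁ - DB w v₂) :=
  kernelVanishesBelow_sub_of_ae_ae fun ha =>
    hB2.causal a ha haT w w v₁ v₂ (ae_of_all _ fun _ _ => rfl) (ae_eq_of_cutoff_eq h)

theorem AssumptionB1.causalLipschitz (hB1 : AssumptionB1 d T B C₀) :
    CausalLipschitz (fun w => kernelIntegral I (B w)) C₀ := fun a b haT w₁ w₂ h =>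
  calc ‖cutoff b (kernelIntegral I (B w₁) - kernelIntegral I (B w₂))‖
      ≤ √(b - a) * ‖B w₁ - B w₂‖ := by
        rw [← map_sub]
        exact norm_cutoff_kernelIntegral_le I
          (IsVolterraKernel.sub (hB1.volterra w₁) (hB1.volterra w₂))
          (hB1.kernelVanishesBelow_sub haT h)
    _ ≤ √(b - a) * (C₀ * ‖w₁ - w₂‖) := by gcongr; exact hB1.lipschitz w₁ w₂
    _ = √(b - a) * C₀ * ‖w₁ - w₂‖ := by ring

theorem AssumptionB2.causalLipschitz (hB2 : AssumptionB2 d T B DB C₀ γ) (w : HSp d T) :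
    CausalLipschitz (kernelIntegral I ∘L DB w) C₀ := fun a b haT v₁ v₂ h =>
  calc ‖cutoff b ((kernelIntegral I ∘L DB w) v₁ - (kernelIntegral I ∘L DB w) v₂)‖
      ≤ √(b - a) * ‖DB w v₁ - DB w v₂‖ := by
        rw [ContinuousLinearMap.comp_apply, ContinuousLinearMap.comp_apply, ← map_sub]
        exact norm_cutoff_kernelIntegral_le I
          (IsVolterraKernel.sub (hB2.volterra w v₁) (hB2.volterra w v₂))
          (hB2.kernelVanishesBelow_sub haT w h)
    _ ≤ √(b - a) * (C₀ * ‖v₁ - v₂‖) := by rw [← map_sub]; gcongr; exact hB2.bound w _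
    _ = √(b - a) * C₀ * ‖v₁ - v₂‖ := by ring

theorem AssumptionB2.norm_comp_sub_le (hB2 : AssumptionB2 d T B DB C₀ γ) (w₁ w₂ : HSp d T) :
    ‖kernelIntegral I ∘L DB w₁ - kernelIntegral I ∘L DB w₂‖ ≤ √T * C₀ * ‖w₁ - w₂‖ ^ γ :=
  calc ‖kernelIntegral I ∘L DB w₁ - kernelIntegral I ∘L DB w₂‖
      = ‖kernelIntegral I ∘L (DB w₁ - DB w₂)‖ := by rw [ContinuousLinearMap.comp_sub]
    _ ≤ √T * (C₀ * ‖w₁ - w₂‖ ^ γ) :=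
        (ContinuousLinearMap.opNorm_comp_le _ _).trans
          (mul_le_mul (opNorm_kernelIntegral_le I) (hB2.holder w₁ w₂) (norm_nonneg _)
            (Real.sqrt_nonneg T))
    _ = √T * C₀ * ‖w₁ - w₂‖ ^ γ := by ring

theorem AssumptionB2.norm_le_norm_sub_smul (hB2 : AssumptionB2 d T B DB C₀ γ) (hT : 0 < T)
    (hC₀ : 0 ≤ C₀) {N : ℕ} (hN : 0 < N) (hδ : √(T / N) * C₀ ≤ 1 / 2) (w : HSp d T) {c : ℝ}
    (hc : c ∈ Set.Icc (0 : ℝ) 1) (v : HSp d T) :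
    ‖v‖ ≤ (2 + 2 * (√T * C₀)) ^ N * ‖v - c • (kernelIntegral I ∘L DB w) v‖ := by
  simpa using (hB2.causalLipschitz I w).norm_sub_le hC₀ hT hN hδ
    (abs_le.2 ⟨by linarith [hc.1], hc.2⟩) (w₁ := v) (w₂ := 0) (by simp)

theorem AssumptionB2.isUnit_one_sub (hB2 : AssumptionB2 d T B DB C₀ γ) (hT : 0 < T)
    (hC₀ : 0 ≤ C₀) {N : ℕ} (hN : 0 < N) (hδ : √(T / N) * C₀ ≤ 1 / 2) (w : HSp d T) :
    IsUnit (1 - kernelIntegral I ∘L DB w) :=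
  isUnit_one_sub_of_forall_norm_le (by positivity) fun _ hc v =>
    hB2.norm_le_norm_sub_smul I hT hC₀ hN hδ w hc v

theorem AssumptionB2.norm_inverse_one_sub_le (hB2 : AssumptionB2 d T B DB C₀ γ) (hT : 0 < T)
    (hC₀ : 0 ≤ C₀) {N : ℕ} (hN : 0 < N) (hδ : √(T / N) * C₀ ≤ 1 / 2) (w : HSp d T) :
    ‖Ring.inverse (1 - kernelIntegral I ∘L DB w)‖ ≤ (2 + 2 * (√T * C₀)) ^ N :=
  norm_inverse_le_of_forall_norm_le (hB2.isUnit_one_sub I hT hC₀ hN hδ w) (by positivity)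
    fun v => by simpa using hB2.norm_le_norm_sub_smul I hT hC₀ hN hδ w (c := 1) (by simp) v

theorem AssumptionB2.norm_inverse_one_sub_sub_le (hB2 : AssumptionB2 d T B DB C₀ γ) (hT : 0 < T)
    (hC₀ : 0 ≤ C₀) {N : ℕ} (hN : 0 < N) (hδ : √(T / N) * C₀ ≤ 1 / 2) (w₁ w₂ : HSp d T) :
    ‖Ring.inverse (1 - kernelIntegral I ∘L DB w₁) - Ring.inverse (1 - kernelIntegral I ∘L DB w₂)‖
      ≤ ((2 + 2 * (√T * C₀)) ^ N) ^ 2 * (√T * C₀) * ‖w₁ - w₂‖ ^ γ := by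
  refine (_root_.norm_inverse_one_sub_sub_le (hB2.isUnit_one_sub I hT hC₀ hN hδ w₁)
    (hB2.isUnit_one_sub I hT hC₀ hN hδ w₂)).trans ?_
  calc _ ≤ (2 + 2 * (√T * C₀)) ^ N * (√T * C₀ * ‖w₁ - w₂‖ ^ γ) * (2 + 2 * (√T * C₀)) ^ N := by
        gcongr
        exacts [hB2.norm_inverse_one_sub_le I hT hC₀ hN hδ w₁, hB2.norm_comp_sub_le I w₁ w₂,
          hB2.norm_inverse_one_sub_le I hT hC₀ hN hδ w₂]
    _ = _ := by ring

theorem AssumptionB1.norm_sub_le_of_eq_add (hB1 : AssumptionB1 d T B C₀) (hT : 0 < T)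
    (hC₀ : 0 ≤ C₀) {N : ℕ} (hN : 0 < N) (hδ : √(T / N) * C₀ ≤ 1 / 2) {w₁ w₂ ψ₁ ψ₂ : HSp d T}
    (h₁ : w₁ = ψ₁ + kernelIntegral I (B w₁)) (h₂ : w₂ = ψ₂ + kernelIntegral I (B w₂)) :
    ‖w₁ - w₂‖ ≤ (2 + 2 * (√T * C₀)) ^ N * ‖ψ₁ - ψ₂‖ :=
  (hB1.causalLipschitz I).norm_sub_le hC₀ hT hN hδ (c := 1) (by simp) (by
    rw [one_smul]; nth_rw 1 [h₁, h₂]; abel)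

end Drift

theorem statement10_general (d : ℕ) (T : ℝ) (hT : 0 < T)
    (B : HSp d T → HTen d T) (C₀ γ : ℝ) (hC₀ : 0 < C₀) (hγ0 : 0 < γ) (hγ1 : γ ≤ 1)
    (hB1 : AssumptionB1 d T B C₀)
    (DB : HSp d T → HSp d T →L[ℝ] HTen d T)
    (hB2 : AssumptionB2 d T B DB C₀ γ)
    (S : ℝ → ℝ → HSp d T → HSp d T)
    (hS : ∀ s t : ℝ, 0 ≤ s → s ≤ t → t ≤ T →
      ∀ ψ : HSp d T, SolvesE d T B s t ψ (S s t ψ)) :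
    ∃ C₂ : ℝ, 0 < C₂ ∧
      ∀ s t : ℝ, 0 ≤ s → s ≤ t → t ≤ T →
        ∃ DS : HSp d T → HSp d T →L[ℝ] HSp d T,
          (∀ ψ : HSp d T, HasFDerivAt (S s t) (DS ψ) ψ) ∧
          (∀ ψ η : HSp d T, SolvesLinE d T DB s t (S s t ψ) η (DS ψ η)) ∧
          (∀ ψ η v : HSp d T, SolvesLinE d T DB s t (S s t ψ) η v → v = DS ψ η) ∧
          (∀ ψ η : HSp d T, ‖DS ψ η‖ ≤ C₂ * ‖η‖) ∧
          (∀ ψ₁ ψ₂ η : HSp d T,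
            ‖DS ψ₁ η - DS ψ₂ η‖ ≤ C₂ * ‖S s t ψ₁ - S s t ψ₂‖ ^ γ * ‖η‖) ∧
          (∃ C₄ : ℝ, 0 < C₄ ∧ ∀ ψ₁ ψ₂ : HSp d T,
            ‖DS ψ₁ - DS ψ₂‖ ≤ C₄ * ‖ψ₁ - ψ₂‖ ^ γ) := by
  obtain ⟨N, hN, hδ⟩ := exists_sqrt_div_mul_le T C₀ one_half_pos
  set M := (2 + 2 * (√T * C₀)) ^ N
  have hM : 1 ≤ M := one_le_pow₀ (by linarith [mul_nonneg (Real.sqrt_nonneg T) hC₀.le])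
  refine ⟨max M (M ^ 2 * (√T * C₀)), by positivity, fun s t h0s hst htT => ?_⟩
  set I := Set.Ioc s t
  have hfix : ∀ ψ, S s t ψ = ψ + kernelIntegral I (B (S s t ψ)) := fun ψ =>
    (eq_add_kernelIntegral_iff h0s htT).2 (hS s t h0s hst htT ψ)
  have hunit := hB2.isUnit_one_sub I hT hC₀.le hN hδ
  have hR := hB2.norm_inverse_one_sub_le I hT hC₀.le hN hδ
  have hhol := hB2.norm_inverse_one_sub_sub_le I hT hC₀.le hN hδ
  have hlip : ∀ ψ₁ ψ₂, ‖S s t ψ₁ - S s t ψ₂‖ ≤ M * ‖ψ₁ - ψ₂‖ := fun ψ₁ ψ₂ =>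
    hB1.norm_sub_le_of_eq_add I hT hC₀.le hN hδ (hfix ψ₁) (hfix ψ₂)
  refine ⟨fun ψ => Ring.inverse (1 - kernelIntegral I ∘L DB (S s t ψ)), fun ψ => ?_,
    fun ψ η => ?_, fun ψ η v hv => ?_, fun ψ η => ?_, fun ψ₁ ψ₂ η => ?_,
    M ^ 2 * (√T * C₀) * M, by positivity, fun ψ₁ ψ₂ => ?_⟩
  · exact hasFDerivAt_of_eq_add_comp (by positivity) (by positivity) hγ0
      (fun w => (kernelIntegral I).hasFDerivAt.comp w (hB2.deriv w))
      (fun w₁ w₂ => hB2.norm_comp_sub_le I w₂ w₁) hfix hlip (hunit _) (hR _)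
  · exact (eq_add_kernelIntegral_iff h0s htT).1 ((eq_add_iff_eq_inverse_one_sub (hunit _)).2 rfl)
  · exact (eq_add_iff_eq_inverse_one_sub (hunit _)).1 ((eq_add_kernelIntegral_iff h0s htT).2 hv)
  · exact ContinuousLinearMap.le_of_opNorm_le _ ((hR _).trans (le_max_left _ _)) η
  · rw [← sub_apply]
    exact ContinuousLinearMap.le_of_opNorm_le _
      ((hhol _ _).trans (by gcongr; exact le_max_right _ _)) η
  · refine (hhol _ _).trans ?_
    rw [mul_assoc _ M]
    gcongr
    exact (Real.rpow_le_rpow (norm_nonneg _) (hlip ψ₁ ψ₂) hγ0.le).trans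
      (rpow_mul_le_mul_rpow hM (norm_nonneg _) hγ1)

/-- Under Assumptions (B1) and (B2), the solution map `S_{s,t} : H → H` of the
Volterra fixed-point equation is Fréchet differentiable; the derivative `DS_{s,t}(ψ)η` is the
unique solution of the linearized equation; and there is a constant `C₂ > 0`, depending only on
`C₀` and `T`, with `‖DS_{s,t}(ψ)η‖ ≤ C₂‖η‖` and
`‖DS_{s,t}(ψ₁)η − DS_{s,t}(ψ₂)η‖ ≤ C₂‖S_{s,t}(ψ₁) − S_{s,t}(ψ₂)‖^γ ‖η‖`. In particular,
`ψ ↦ DS_{s,t}(ψ)` is `γ`-Hölder continuous from `H` to `ℒ(H;H)`. -/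
theorem statement10 (d : ℕ) (hd : 1 ≤ d) (T : ℝ) (hT : 0 < T)
    (B : HSp d T → HTen d T) (C₀ γ : ℝ) (hC₀ : 0 < C₀) (hγ0 : 0 < γ) (hγ1 : γ ≤ 1)
    (hB1 : AssumptionB1 d T B C₀)
    (DB : HSp d T → HSp d T →L[ℝ] HTen d T)
    (hB2 : AssumptionB2 d T B DB C₀ γ)
    (S : ℝ → ℝ → HSp d T → HSp d T)
    (hS : ∀ s t : ℝ, 0 ≤ s → s ≤ t → t ≤ T →
      ∀ ψ : HSp d T, SolvesE d T B s t ψ (S s t ψ)) :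
    ∃ C₂ : ℝ, 0 < C₂ ∧
      ∀ s t : ℝ, 0 ≤ s → s ≤ t → t ≤ T →
        ∃ DS : HSp d T → HSp d T →L[ℝ] HSp d T,
          (∀ ψ : HSp d T, HasFDerivAt (S s t) (DS ψ) ψ) ∧
          (∀ ψ η : HSp d T, SolvesLinE d T DB s t (S s t ψ) η (DS ψ η)) ∧
          (∀ ψ η v : HSp d T, SolvesLinE d T DB s t (S s t ψ) η v → v = DS ψ η) ∧
          (∀ ψ η : HSp d T, ‖DS ψ η‖ ≤ C₂ * ‖η‖) ∧
          (∀ ψ₁ ψ₂ η : HSp d T,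
            ‖DS ψ₁ η - DS ψ₂ η‖ ≤ C₂ * ‖S s t ψ₁ - S s t ψ₂‖ ^ γ * ‖η‖) ∧
          (∃ C₄ : ℝ, 0 < C₄ ∧ ∀ ψ₁ ψ₂ : HSp d T,
            ‖DS ψ₁ - DS ψ₂‖ ≤ C₄ * ‖ψ₁ - ψ₂‖ ^ γ) :=
  statement10_general d T hT B C₀ γ hC₀ hγ0 hγ1 hB1 DB hB2 S hS
end
end
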